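/- arXiv:1906.06164 — 2 statements merged into one kernel-verified Lean document; each statement's English description precedes it below -/
import Mathlib

section
/- Let d ≥ 1 be an integer and p ∈ (0,1), and let D(dp) be the convex set of pmfs on {0,…,d} with mean dp. If pd is not an integer, the number of extreme points of D(dp) equals (⌊pd⌋ + 1)·(d − ⌊pd⌋). If pd is an integer, the number of extreme points of D(dp) equals d²·p·(1−p) + 1. -/
/-!
Write `m = p d`. A pmf `q ∈ D(m)` charging three atoms `i, j, k` is not extreme: the vector
`(j - k) e_i + (k - i) e_j + (i - j) e_k` preserves mass and mean, so `q ± ε v ∈ D(m)` for small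
`ε > 0`. Conversely, a pmf charging at most two atoms is the only element of `D(m)` whose support
lies in its own, which makes it extreme. Hence the extreme points are the two-point laws on
`{i, j}` with `i < m < j`, together with the point mass at `m` when `m` is an integer, and there
are `⌈m⌉ (d - ⌊m⌋) + [m ∈ ℕ]` of them.
-/

open Filter Topology

theorem notMem_extremePoints_of_add_mem_of_sub_mem {E : Type*} [AddCommGroup E] [Module ℝ E]
    {A : Set E} {x v : E} (hv : v ≠ 0) (hadd : x + v ∈ A) (hsub : x - v ∈ A) :
    x ∉ A.extremePoints ℝ := by
  intro hx
  have hseg : x ∈ openSegment ℝ (x + v) (x - v) :=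
    ⟨1 / 2, 1 / 2, by norm_num, by norm_num, by norm_num, by module⟩
  have := (mem_extremePoints_iff_left.1 hx).2 _ hadd _ hsub hseg
  exact hv (by simpa using this)

theorem mem_extremePoints_of_eq_of_support_subset {ι : Type*} {A : Set (ι → ℝ)} {x : ι → ℝ}
    (hA : ∀ y ∈ A, 0 ≤ y) (hx : x ∈ A)
    (huniq : ∀ y ∈ A, Function.support y ⊆ Function.support x → y = x) :
    x ∈ A.extremePoints ℝ := by
  refine mem_extremePoints_iff_left.2 ⟨hx, fun y hy z hz hseg => huniq y hy ?_⟩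
  obtain ⟨a, b, ha, hb, hab, rfl⟩ := hseg
  intro t hyt hxt
  have hy : 0 ≤ a * y t := mul_nonneg ha.le (hA y hy t)
  have hz : 0 ≤ b * z t := mul_nonneg hb.le (hA z hz t)
  simp only [Pi.add_apply, Pi.smul_apply, smul_eq_mul] at hxt
  exact hyt ((mul_eq_zero.1 (by linarith)).resolve_left ha.ne')

theorem eventually_nonneg_add_smul {ι : Type*} [Finite ι] {q v : ι → ℝ} (hq : 0 ≤ q)
    (hv : Function.support v ⊆ Function.support q) :
    ∀ᶠ ε in 𝓝 (0 : ℝ), 0 ≤ q + ε • v := by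
  simp only [Pi.le_def, Filter.eventually_all, Pi.zero_apply, Pi.add_apply, Pi.smul_apply,
    smul_eq_mul]
  intro t
  rcases (hq t).eq_or_lt with hqt | hqt
  · have hvt : v t = 0 := Function.notMem_support.1 fun h => hv h hqt.symm
    simp [hvt, ← hqt]
  · have hlim : Tendsto (fun ε : ℝ => q t + ε * v t) (𝓝 0) (𝓝 (q t)) :=
      (continuous_const.add (continuous_id.mul continuous_const)).tendsto' _ _ (by simp)
    filter_upwards [hlim.eventually_const_lt hqt] with ε hε using hε.le

theorem Fin.ncard_setOf_val_lt {n c : ℕ} : {i : Fin n | i.val < c}.ncard = min n c := by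
  rw [Set.ncard_eq_toFinset_card', Set.toFinset_ofPred, Fin.card_filter_val_lt]

theorem Fin.ncard_setOf_lt_cast (d : ℕ) {m : ℝ} (hm : 0 ≤ m) :
    {j : Fin (d + 1) | m < j}.ncard = d - ⌊m⌋₊ := by
  have h := Set.ncard_add_ncard_compl {j : Fin (d + 1) | j.val < ⌊m⌋₊ + 1}
  rw [Set.compl_ofPred] at h
  simp only [not_lt, Nat.add_one_le_iff, Nat.floor_lt hm] at h
  rw [Fin.ncard_setOf_val_lt, Nat.card_eq_fintype_card, Fintype.card_fin] at h
  omega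

theorem Fin.ncard_setOf_cast_lt (d : ℕ) {m : ℝ} (hmd : m ≤ d) :
    {i : Fin (d + 1) | (i : ℝ) < m}.ncard = ⌈m⌉₊ := by
  simp_rw [← Nat.lt_ceil, Fin.ncard_setOf_val_lt]
  have := Nat.ceil_le.2 hmd
  omega

open Classical in
theorem Fin.ncard_setOf_cast_eq (d : ℕ) {m : ℝ} (hmd : m ≤ d) :
    {i : Fin (d + 1) | (i : ℝ) = m}.ncard = if ∃ k : ℕ, (k : ℝ) = m then 1 else 0 := by
  split_ifs with h
  · obtain ⟨k, rfl⟩ := h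
    have hk : k < d + 1 := by exact_mod_cast Nat.lt_succ_of_le (by exact_mod_cast hmd)
    rw [Set.ncard_eq_one]
    exact ⟨⟨k, hk⟩, Set.ext fun i => by simp [Fin.ext_iff]⟩
  · exact (Set.ncard_eq_zero).2 (Set.eq_empty_of_forall_notMem fun i hi => h ⟨i, hi⟩)

theorem Nat.ceil_eq_floor_add_one {R : Type*} [Semiring R] [LinearOrder R] [IsOrderedRing R]
    [FloorSemiring R] {a : R} (ha : 0 ≤ a) (h : ¬ ∃ k : ℕ, (k : R) = a) :
    ⌈a⌉₊ = ⌊a⌋₊ + 1 :=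
  (Nat.ceil_le_floor_add_one a).antisymm
    (Nat.lt_ceil.2 ((Nat.floor_le ha).lt_of_ne fun h' => h ⟨_, h'⟩))

theorem Pi.single_left_injective {ι M : Type*} [DecidableEq ι] [Zero M] {a : M} (ha : a ≠ 0) :
    Function.Injective fun i : ι => Pi.single i a :=
  fun i j h => by simpa [Pi.single_apply, ha, eq_comm] using congrFun h i

def pmfsWithMean (n : ℕ) (m : ℝ) : Set (Fin n → ℝ) :=
  {q | (∀ t, 0 ≤ q t) ∧ (∑ t, q t = 1) ∧ (∑ t, (t.val : ℝ) * q t = m)}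

noncomputable def twoPoint {n : ℕ} (m : ℝ) (i j : Fin n) : Fin n → ℝ :=
  Pi.single i ((j - m) / (j - i)) + Pi.single j ((m - i) / (j - i))

namespace pmfsWithMean

variable {n : ℕ} {m : ℝ}

theorem add_mem {q v : Fin n → ℝ} (hq : q ∈ pmfsWithMean n m) (hnonneg : 0 ≤ q + v)
    (hsum : ∑ t, v t = 0) (hmean : ∑ t, (t.val : ℝ) * v t = 0) : q + v ∈ pmfsWithMean n m := by
  obtain ⟨-, hq₁, hqm⟩ := hq
  refine ⟨hnonneg, ?_, ?_⟩
  · simp [Finset.sum_add_distrib, hq₁, hsum]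
  · simp [mul_add, Finset.sum_add_distrib, hqm, hmean]

theorem notMem_extremePoints {q v : Fin n → ℝ} (hq : q ∈ pmfsWithMean n m) (hv : v ≠ 0)
    (hsupp : Function.support v ⊆ Function.support q)
    (hsum : ∑ t, v t = 0) (hmean : ∑ t, (t.val : ℝ) * v t = 0) :
    q ∉ (pmfsWithMean n m).extremePoints ℝ := by
  have hnonneg := eventually_nonneg_add_smul hq.1 hsupp
  have hnonneg_neg : ∀ᶠ ε in 𝓝 (0 : ℝ), 0 ≤ q + (-ε) • v := by
    simpa using (continuous_neg.tendsto' (0 : ℝ) 0 neg_zero).eventually hnonneg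
  obtain ⟨ε, hε, hadd, hsub⟩ := (hnonneg.and hnonneg_neg).exists_gt
  refine notMem_extremePoints_of_add_mem_of_sub_mem (smul_ne_zero hε.ne' hv) ?_ ?_
  · exact add_mem hq hadd (by simp [← Finset.mul_sum, hsum])
      (by simp [mul_left_comm _ ε, ← Finset.mul_sum, hmean])
  · rw [sub_eq_add_neg, ← neg_smul]
    exact add_mem hq hsub (by simp [← Finset.mul_sum, hsum])
      (by simp [mul_left_comm _ ε, ← Finset.mul_sum, hmean])

theorem eq_zero_of_mem_extremePoints {q : Fin n → ℝ}
    (hq : q ∈ (pmfsWithMean n m).extremePoints ℝ) {i j k : Fin n}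
    (hij : i ≠ j) (hik : i ≠ k) (hjk : j ≠ k) (hi : q i ≠ 0) (hj : q j ≠ 0) : q k = 0 := by
  by_contra hk
  set v : Fin n → ℝ :=
    Pi.single i ((j : ℝ) - k) + Pi.single j ((k : ℝ) - i) + Pi.single k ((i : ℝ) - j)
  have hvi : v i = j - k := by simp [v, hij, hik]
  refine notMem_extremePoints hq.1 (v := v) ?_ ?_ ?_ ?_ hq
  · intro hv
    have : (j : ℝ) - k = 0 := by rw [← hvi, hv, Pi.zero_apply]
    exact hjk (Fin.ext (by exact_mod_cast sub_eq_zero.1 this))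
  · intro t ht
    have : t = i ∨ t = j ∨ t = k := by
      by_contra! h
      exact ht (by simp [v, h.1, h.2.1, h.2.2])
    rcases this with rfl | rfl | rfl <;> assumption
  · simp [v, Finset.sum_add_distrib]
  · simp [v, Finset.sum_add_distrib, mul_add, Pi.single_apply]
    ring

theorem sum_twoPoint {i j : Fin n} (hij : i ≠ j) : ∑ t, twoPoint m i j t = 1 := by
  have : (j : ℝ) - i ≠ 0 := sub_ne_zero.2 (by simpa [Fin.val_eq_val] using hij.symm)
  simp [twoPoint, Finset.sum_add_distrib]
  field_simp
  ring

theorem sum_mul_twoPoint {i j : Fin n} (hij : i ≠ j) :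
    ∑ t, (t.val : ℝ) * twoPoint m i j t = m := by
  have : (j : ℝ) - i ≠ 0 := sub_ne_zero.2 (by simpa [Fin.val_eq_val] using hij.symm)
  simp [twoPoint, Finset.sum_add_distrib, mul_add, Pi.single_apply]
  field_simp
  ring

theorem twoPoint_apply_left {i j : Fin n} (hij : i ≠ j) :
    twoPoint m i j i = (j - m) / (j - i) := by
  simp [twoPoint, hij]

theorem twoPoint_apply_right {i j : Fin n} (hij : i ≠ j) :
    twoPoint m i j j = (m - i) / (j - i) := by
  simp [twoPoint, hij.symm]

theorem twoPoint_apply_left_pos {i j : Fin n} (hi : (i : ℝ) < m) (hj : m < j) :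
    0 < twoPoint m i j i := by
  rw [twoPoint_apply_left (by rintro rfl; linarith)]
  exact div_pos (by linarith) (by linarith)

theorem twoPoint_apply_right_pos {i j : Fin n} (hi : (i : ℝ) < m) (hj : m < j) :
    0 < twoPoint m i j j := by
  rw [twoPoint_apply_right (by rintro rfl; linarith)]
  exact div_pos (by linarith) (by linarith)

theorem support_twoPoint_subset (i j : Fin n) :
    Function.support (twoPoint m i j) ⊆ {i, j} :=
  (Function.support_add _ _).trans
    (Set.union_subset_union (Pi.support_single_subset) (Pi.support_single_subset))

theorem twoPoint_mem {i j : Fin n} (hi : (i : ℝ) < m) (hj : m < j) :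
    twoPoint m i j ∈ pmfsWithMean n m := by
  have hij : i ≠ j := by rintro rfl; linarith
  refine ⟨fun t => ?_, sum_twoPoint hij, sum_mul_twoPoint hij⟩
  simp only [twoPoint, Pi.add_apply, Pi.single_apply]
  have : 0 ≤ (j - m) / (j - i : ℝ) := div_nonneg (by linarith) (by linarith)
  have : 0 ≤ (m - i) / (j - i : ℝ) := div_nonneg (by linarith) (by linarith)
  split_ifs <;> linarith

theorem eq_twoPoint_of_support_subset {q : Fin n → ℝ} (hq : q ∈ pmfsWithMean n m) {i j : Fin n}
    (hij : i ≠ j) (hsupp : Function.support q ⊆ {i, j}) : q = twoPoint m i j := by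
  obtain ⟨-, hq₁, hqm⟩ := hq
  have hzero : ∀ t, t ≠ i ∧ t ≠ j → q t = 0 := fun t ht =>
    Function.support_subset_iff'.1 hsupp t (by simpa using ht)
  rw [Fintype.sum_eq_add i j hij hzero] at hq₁
  rw [Fintype.sum_eq_add i j hij (fun t ht => by simp [hzero t ht])] at hqm
  have hji : (j : ℝ) - i ≠ 0 := sub_ne_zero.2 (by simpa [Fin.val_eq_val] using hij.symm)
  ext t
  by_cases hti : t = i
  · subst hti
    rw [twoPoint_apply_left hij, eq_div_iff hji]
    linear_combination (j : ℝ) * hq₁ - hqm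
  by_cases htj : t = j
  · subst htj
    rw [twoPoint_apply_right hij, eq_div_iff hji]
    linear_combination hqm - (i : ℝ) * hq₁
  · rw [hzero t ⟨hti, htj⟩, eq_comm, ← Function.notMem_support]
    exact fun h => by simpa [hti, htj] using support_twoPoint_subset i j h

theorem single_mem {i : Fin n} (hi : (i : ℝ) = m) : Pi.single i 1 ∈ pmfsWithMean n m := by
  refine ⟨fun t => ?_, by simp, by simp [Pi.single_apply, hi]⟩
  simp only [Pi.single_apply]
  split_ifs <;> norm_num

theorem val_eq_of_single_mem {i : Fin n} (h : Pi.single i 1 ∈ pmfsWithMean n m) :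
    (i : ℝ) = m := by
  simpa [Pi.single_apply] using h.2.2

theorem eq_single_of_support_subset {q : Fin n → ℝ} (hq : q ∈ pmfsWithMean n m) {i : Fin n}
    (hsupp : Function.support q ⊆ {i}) : q = Pi.single i 1 := by
  have hzero : ∀ t, t ≠ i → q t = 0 := fun t ht => Function.support_subset_iff'.1 hsupp t ht
  have hqi : q i = 1 := by rw [← Fintype.sum_eq_single i hzero]; exact hq.2.1
  ext t
  by_cases hti : t = i
  · subst hti; simp [hqi]
  · simp [hti, hzero t hti]

theorem twoPoint_mem_extremePoints {i j : Fin n} (hi : (i : ℝ) < m) (hj : m < j) :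
    twoPoint m i j ∈ (pmfsWithMean n m).extremePoints ℝ := by
  have hij : i ≠ j := by rintro rfl; linarith
  exact mem_extremePoints_of_eq_of_support_subset (fun _ hy => hy.1) (twoPoint_mem hi hj)
    fun _ hy hsupp =>
      eq_twoPoint_of_support_subset hy hij (hsupp.trans (support_twoPoint_subset i j))

theorem single_mem_extremePoints {i : Fin n} (hi : (i : ℝ) = m) :
    Pi.single i 1 ∈ (pmfsWithMean n m).extremePoints ℝ :=
  mem_extremePoints_of_eq_of_support_subset (fun _ hy => hy.1) (single_mem hi)
    fun _ hy hsupp => eq_single_of_support_subset hy (hsupp.trans Pi.support_single_subset)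

theorem eq_twoPoint_or_eq_single_of_mem_extremePoints {q : Fin n → ℝ}
    (hq : q ∈ (pmfsWithMean n m).extremePoints ℝ) :
    (∃ i j : Fin n, (i : ℝ) < m ∧ m < j ∧ q = twoPoint m i j) ∨
      ∃ i : Fin n, (i : ℝ) = m ∧ q = Pi.single i 1 := by
  have hmem := hq.1
  obtain ⟨i, -, hi⟩ := Finset.exists_ne_zero_of_sum_ne_zero (hmem.2.1.symm ▸ one_ne_zero)
  by_cases htwo : ∃ j, j ≠ i ∧ q j ≠ 0
  · obtain ⟨j, hji, hj⟩ := htwo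
    have hsupp : Function.support q ⊆ {i, j} := fun t ht => by
      by_contra h
      simp only [Set.mem_insert_iff, Set.mem_singleton_iff, not_or] at h
      exact ht (eq_zero_of_mem_extremePoints hq hji.symm (Ne.symm h.1) (Ne.symm h.2) hi hj)
    left
    wlog hlt : (i : ℝ) < j generalizing i j
    · have hne : (j : ℝ) ≠ i := fun h => hji (Fin.ext (by exact_mod_cast h))
      exact this j hj i hji.symm hi (Set.pair_comm i j ▸ hsupp) ((not_lt.1 hlt).lt_of_ne hne)
    have hqi : 0 < q i := (hmem.1 i).lt_of_ne' hi
    have hqj : 0 < q j := (hmem.1 j).lt_of_ne' hj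
    have hq2 := eq_twoPoint_of_support_subset hmem hji.symm hsupp
    rw [hq2, twoPoint_apply_left hji.symm, div_pos_iff_of_pos_right (sub_pos.2 hlt)] at hqi
    rw [hq2, twoPoint_apply_right hji.symm, div_pos_iff_of_pos_right (sub_pos.2 hlt)] at hqj
    exact ⟨i, j, sub_pos.1 hqj, sub_pos.1 hqi, hq2⟩
  · push Not at htwo
    have hq1 := eq_single_of_support_subset hmem (i := i) fun t ht => by
      by_contra h; exact ht (htwo t h)
    exact Or.inr ⟨i, val_eq_of_single_mem (hq1 ▸ hmem), hq1⟩

theorem extremePoints_eq :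
    (pmfsWithMean n m).extremePoints ℝ =
      (fun ij : Fin n × Fin n => twoPoint m ij.1 ij.2) '' {ij | (ij.1 : ℝ) < m ∧ m < ij.2} ∪
        (fun i => Pi.single i 1) '' {i | (i : ℝ) = m} := by
  ext q
  constructor
  · intro hq
    rcases eq_twoPoint_or_eq_single_of_mem_extremePoints hq with ⟨i, j, hi, hj, rfl⟩ | ⟨i, hi, rfl⟩
    · exact Or.inl ⟨(i, j), ⟨hi, hj⟩, rfl⟩
    · exact Or.inr ⟨i, hi, rfl⟩
  · rintro (⟨⟨i, j⟩, ⟨hi, hj⟩, rfl⟩ | ⟨i, hi, rfl⟩)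
    · exact twoPoint_mem_extremePoints hi hj
    · exact single_mem_extremePoints hi

theorem injOn_twoPoint :
    Set.InjOn (fun ij : Fin n × Fin n => twoPoint m ij.1 ij.2)
      {ij | (ij.1 : ℝ) < m ∧ m < ij.2} := by
  rintro ⟨i, j⟩ ⟨hi, hj⟩ ⟨i', j'⟩ ⟨hi', hj'⟩ h
  dsimp only at h hi hj hi' hj'
  have hmem : ∀ t, 0 < twoPoint m i j t → t = i' ∨ t = j' := fun t ht =>
    support_twoPoint_subset i' j' (h ▸ ht.ne')
  obtain rfl : i = i' := (hmem i (twoPoint_apply_left_pos hi hj)).resolve_right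
    (by rintro rfl; linarith)
  obtain rfl : j = j' := (hmem j (twoPoint_apply_right_pos hi hj)).resolve_left
    (by rintro rfl; linarith)
  rfl

theorem disjoint_image_twoPoint_image_single :
    Disjoint
      ((fun ij : Fin n × Fin n => twoPoint m ij.1 ij.2) '' {ij | (ij.1 : ℝ) < m ∧ m < ij.2})
      ((fun i => Pi.single i 1) '' {i | (i : ℝ) = m}) := by
  refine Set.disjoint_left.2 ?_
  rintro _ ⟨⟨i, j⟩, ⟨hi, hj⟩, rfl⟩ ⟨k, hk, heq⟩
  have hik : i ≠ k := by rintro rfl; exact hi.ne hk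
  have := congrFun heq i
  simp only [Pi.single_eq_of_ne hik] at this
  exact (twoPoint_apply_left_pos hi hj).ne' this.symm

open Classical in
theorem ncard_extremePoints {d : ℕ} (hm : 0 ≤ m) (hmd : m ≤ d) :
    ((pmfsWithMean (d + 1) m).extremePoints ℝ).ncard =
      ⌈m⌉₊ * (d - ⌊m⌋₊) + if ∃ k : ℕ, (k : ℝ) = m then 1 else 0 := by
  rw [extremePoints_eq, Set.ncard_union_eq disjoint_image_twoPoint_image_single (Set.toFinite _)
      (Set.toFinite _), injOn_twoPoint.ncard_image,
    (Pi.single_left_injective one_ne_zero).injOn.ncard_image, ← Fin.ncard_setOf_cast_eq d hmd,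
    ← Fin.ncard_setOf_cast_lt d hmd, ← Fin.ncard_setOf_lt_cast d hm, ← Set.ncard_prod]
  rfl

end pmfsWithMean

theorem stmt_4_general (d : ℕ) (p : ℝ) (hp : p ∈ Set.Ioo (0 : ℝ) 1)
    (D : Set (Fin (d + 1) → ℝ))
    (hD : D = {q : Fin (d + 1) → ℝ |
      (∀ j, 0 ≤ q j) ∧ (∑ j, q j = 1) ∧ (∑ j, (j.val : ℝ) * q j = p * d)}) :
    ((¬ ∃ k : ℕ, (k : ℝ) = p * d) →
      (Set.extremePoints ℝ D).ncard = (Nat.floor (p * d) + 1) * (d - Nat.floor (p * d))) ∧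
    ((∃ k : ℕ, (k : ℝ) = p * d) →
      ((Set.extremePoints ℝ D).ncard : ℝ) = (d : ℝ) ^ 2 * p * (1 - p) + 1) := by
  have hm : 0 ≤ p * d := mul_nonneg hp.1.le d.cast_nonneg
  have hmd : p * d ≤ d := mul_le_of_le_one_left d.cast_nonneg hp.2.le
  have hDeq : D = pmfsWithMean (d + 1) (p * d) := hD
  subst hDeq
  have hcount := pmfsWithMean.ncard_extremePoints hm hmd
  refine ⟨fun hint => ?_, fun ⟨k, hk⟩ => ?_⟩
  · rw [hcount, if_neg hint, Nat.ceil_eq_floor_add_one hm hint, add_zero]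
  · have hkd : k ≤ d := by exact_mod_cast hk ▸ hmd
    rw [hcount, if_pos ⟨k, hk⟩, ← hk, Nat.ceil_natCast, Nat.floor_natCast]
    push_cast [hkd]
    rw [hk]
    ring

/-- If `pd` is not an integer, the number of extreme points of `D(dp)` is
`(⌊pd⌋ + 1)(d − ⌊pd⌋)`; if `pd` is an integer, it is `d² p (1−p) + 1`. -/
theorem stmt_4 (d : ℕ) (hd : 1 ≤ d) (p : ℝ) (hp : p ∈ Set.Ioo (0 : ℝ) 1)
    (D : Set (Fin (d + 1) → ℝ))
    (hD : D = {q : Fin (d + 1) → ℝ |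
      (∀ j, 0 ≤ q j) ∧ (∑ j, q j = 1) ∧ (∑ j, (j.val : ℝ) * q j = p * d)}) :
    ((¬ ∃ k : ℕ, (k : ℝ) = p * d) →
      (Set.extremePoints ℝ D).ncard = (Nat.floor (p * d) + 1) * (d - Nat.floor (p * d))) ∧
    ((∃ k : ℕ, (k : ℝ) = p * d) →
      ((Set.extremePoints ℝ D).ncard : ℝ) = (d : ℝ) ^ 2 * p * (1 - p) + 1) :=
  stmt_4_general d p hp D hD
end

section
/- Let d ≥ 1 be an integer, p ∈ (0,1) with pd not an integer, α ∈ (0,1), let j1^M = ⌊pd⌋, and suppose (p − (1−α))·d/α > j1^M. Then, over the family of ray densities r_{j1,j2} (integers 0 ≤ j1 < pd < j2 ≤ d), the minimum of VaR_α(r_{j1,j2}) equals j1^M + 1 and the maximum of VaR_α(r_{j1,j2}) equals d. -/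
/-!
Under the hypothesis `(1 - α) d + α ⌊pd⌋ < pd`, every ray density puts mass less than `α` on its
left atom `j1 ≤ ⌊pd⌋`, so its `VaR_α` is its right atom `j2`. Since the left atom `⌊pd⌋` is always
admissible, the set of values of `VaR_α` is exactly `{⌊pd⌋ + 1, …, d}`.
-/

open Finset

/-- Value-at-Risk at level `α` of a pmf `f` on `{0,…,d}`:
`VaR_α(f) = min {y ∈ {0,…,d} : ∑_{j=0}^y f(j) ≥ α}`. -/
noncomputable def VaR (d : ℕ) (α : ℝ) (f : ℕ → ℝ) : ℕ :=
  sInf {y : ℕ | y ≤ d ∧ α ≤ ∑ j ∈ Finset.range (y + 1), f j}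

/-- The ray density `r_{j1,j2}` on `{0,…,d}`: mass `(j2 − pd)/(j2 − j1)` at `j1` and
`(pd − j1)/(j2 − j1)` at `j2`. -/
noncomputable def rayDensity (d : ℕ) (p : ℝ) (j1 j2 : ℕ) : ℕ → ℝ := fun j =>
  if j = j1 then ((j2 : ℝ) - p * d) / ((j2 : ℝ) - (j1 : ℝ))
  else if j = j2 then (p * d - (j1 : ℝ)) / ((j2 : ℝ) - (j1 : ℝ))
  else 0

theorem VaR_eq_of_forall_lt {d y : ℕ} {α : ℝ} {f : ℕ → ℝ} (hyd : y ≤ d)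
    (hy : α ≤ ∑ j ∈ range (y + 1), f j) (hlt : ∀ z < y, ∑ j ∈ range (z + 1), f j < α) :
    VaR d α f = y := by
  have hmem : y ∈ {y : ℕ | y ≤ d ∧ α ≤ ∑ j ∈ range (y + 1), f j} := ⟨hyd, hy⟩
  refine le_antisymm (Nat.sInf_le hmem) (le_csInf ⟨y, hmem⟩ ?_)
  rintro z ⟨-, hz⟩
  by_contra! hzy
  exact (hlt z hzy).not_ge hz

theorem sum_range_rayDensity (d : ℕ) (p : ℝ) {j1 j2 : ℕ} (hne : j1 ≠ j2) (n : ℕ) :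
    ∑ j ∈ range n, rayDensity d p j1 j2 j =
      (if j1 < n then ((j2 : ℝ) - p * d) / ((j2 : ℝ) - j1) else 0)
      + (if j2 < n then (p * d - j1) / ((j2 : ℝ) - j1) else 0) := by
  have hsplit : ∀ j, rayDensity d p j1 j2 j =
      (if j = j1 then ((j2 : ℝ) - p * d) / ((j2 : ℝ) - j1) else 0)
      + (if j = j2 then (p * d - j1) / ((j2 : ℝ) - j1) else 0) := by
    intro j
    unfold rayDensity
    by_cases h1 : j = j1
    · subst h1; simp [hne]
    · by_cases h2 : j = j2 <;> simp [h1, h2, hne.symm]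
  simp only [hsplit, sum_add_distrib, sum_ite_eq', mem_range]

theorem VaR_rayDensity_eq_right {d : ℕ} {p α : ℝ} {j1 j2 : ℕ} (hj : j1 < j2) (hj2 : j2 ≤ d)
    (hα0 : 0 < α) (hα1 : α ≤ 1) (hleft : ((j2 : ℝ) - p * d) / ((j2 : ℝ) - j1) < α) :
    VaR d α (rayDensity d p j1 j2) = j2 := by
  have hpos : (0 : ℝ) < (j2 : ℝ) - j1 := sub_pos.mpr (by exact_mod_cast hj)
  have htotal : ∑ j ∈ range (j2 + 1), rayDensity d p j1 j2 j = 1 := by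
    rw [sum_range_rayDensity d p hj.ne, if_pos (by omega), if_pos (by omega), ← add_div]
    field_simp
    ring
  refine VaR_eq_of_forall_lt hj2 (htotal ▸ hα1) fun z hz => ?_
  rw [sum_range_rayDensity d p hj.ne, if_neg (show ¬j2 < z + 1 by omega)]
  split_ifs <;> linarith

theorem sub_div_sub_lt_iff {a b x α : ℝ} (hab : a < b) :
    (b - x) / (b - a) < α ↔ (1 - α) * b + α * a < x := by
  rw [div_lt_iff₀ (sub_pos.mpr hab)]
  constructor <;> intro h <;> linarith

theorem VaR_rayDensity_eq_right_of_floor {d j1 j2 : ℕ} {p α : ℝ} (hα0 : 0 < α) (hα1 : α ≤ 1)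
    (hkey : (1 - α) * d + α * ⌊p * d⌋₊ < p * d)
    (h1 : (j1 : ℝ) < p * d) (h2 : p * d < j2) (h2d : j2 ≤ d) :
    VaR d α (rayDensity d p j1 j2) = j2 := by
  have hj1 : (j1 : ℝ) ≤ ⌊p * d⌋₊ := by exact_mod_cast Nat.le_floor h1.le
  have hj2 : (j2 : ℝ) ≤ d := by exact_mod_cast h2d
  refine VaR_rayDensity_eq_right (by exact_mod_cast h1.trans h2) h2d hα0 hα1
    ((sub_div_sub_lt_iff (h1.trans h2)).mpr ?_)
  linarith [mul_le_mul_of_nonneg_left hj2 (sub_nonneg.mpr hα1),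
    mul_le_mul_of_nonneg_left hj1 hα0.le]

/-- If `pd` is not an integer and `(p − (1−α))d/α > ⌊pd⌋`, then over the ray
densities `r_{j1,j2}` (`0 ≤ j1 < pd < j2 ≤ d`) the minimum of `VaR_α` is `⌊pd⌋ + 1` and the
maximum is `d`. -/
theorem stmt_17 (d : ℕ) (hd : 1 ≤ d) (p : ℝ) (hp : p ∈ Set.Ioo (0 : ℝ) 1)
    (hnotint : ¬ ∃ k : ℕ, (k : ℝ) = p * d)
    (α : ℝ) (hα : α ∈ Set.Ioo (0 : ℝ) 1)
    (hgt : (Nat.floor (p * d) : ℝ) < (p - (1 - α)) * d / α)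
    (S : Set ℕ)
    (hS : S = {v : ℕ | ∃ j1 j2 : ℕ, (j1 : ℝ) < p * d ∧ p * d < (j2 : ℝ) ∧ j2 ≤ d ∧
      v = VaR d α (rayDensity d p j1 j2)}) :
    IsLeast S (Nat.floor (p * d) + 1) ∧ IsGreatest S d := by
  obtain ⟨hp0, hp1⟩ := hp
  obtain ⟨hα0, hα1⟩ := hα
  set m := Nat.floor (p * d)
  have hpd0 : 0 ≤ p * d := by positivity
  have hmlt : (m : ℝ) < p * d :=
    (Nat.floor_le hpd0).lt_of_ne fun h => hnotint ⟨m, h⟩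
  have hpdd : p * d < d := mul_lt_of_lt_one_left (by exact_mod_cast hd) hp1
  have hlt_iff : ∀ v : ℕ, p * d < v ↔ m + 1 ≤ v := fun v => (Nat.floor_lt hpd0).symm
  have hkey : (1 - α) * d + α * m < p * d := by
    have := (lt_div_iff₀ hα0).mp hgt
    linarith
  have hVaR : ∀ j1 j2 : ℕ, (j1 : ℝ) < p * d → p * d < j2 → j2 ≤ d →
      VaR d α (rayDensity d p j1 j2) = j2 := fun j1 j2 =>
    VaR_rayDensity_eq_right_of_floor hα0 hα1.le hkey
  have hSeq : S = Set.Icc (m + 1) d := by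
    ext v
    simp only [hS, Set.mem_ofPred_eq, Set.mem_Icc, ← hlt_iff]
    constructor
    · rintro ⟨j1, j2, h1, h2, h2d, rfl⟩
      rw [hVaR j1 j2 h1 h2 h2d]
      exact ⟨h2, h2d⟩
    · rintro ⟨h2, h2d⟩
      exact ⟨m, v, hmlt, h2, h2d, (hVaR m v hmlt h2 h2d).symm⟩
  have hmd : m + 1 ≤ d := (hlt_iff d).mp hpdd
  rw [hSeq]
  exact ⟨isLeast_Icc hmd, isGreatest_Icc hmd⟩
end
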